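/- arXiv:2210.03626 — 4 statements merged into one kernel-verified Lean document; each statement's English description precedes it below -/
import Mathlib

section
/- Let M be a faithful reduced multiplication R-module. Then for each a ∈ R, (0 :_M Ann_R(aM)) equals the intersection of all minimal prime submodules of M containing aM. -/
/-!
If `j · aM = 0` and `Q` is a prime submodule, then `aM ≤ Q` or `j ∈ (Q : M)`. Applied to minimal
primes this gives `j · 𝔓_{aM} ≤ Q` for every minimal prime `Q`, hence for every prime (each one
contains a minimal one), hence `j · 𝔓_{aM} = 0` since `M` is reduced.

Conversely, if `P ⊇ aM` is a minimal prime submodule, then `p = (P : M)` is a minimal prime of the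
reduced ring `R` containing `a`, so some `s ∉ p` kills `a`. Then `s ∈ Ann(aM)`, so `s x = 0 ∈ P`
and `x ∈ P` for every `x ∈ (0 :_M Ann(aM))`. Minimality of `p`: for a minimal prime `q ≤ p` the
kernel of `M → M_q` equals `qM`, is a prime submodule contained in `P`, hence equals `P`, and this
forces `p ≤ q`.
-/

variable {R : Type*} [CommRing R] {M : Type*} [AddCommGroup M] [Module R M]

/-- `M` is a multiplication module: every submodule is `IM` for some ideal `I`. -/
def IsMultiplicationModule (R M : Type*) [CommRing R] [AddCommGroup M] [Module R M] : Prop :=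
  ∀ N : Submodule R M, ∃ I : Ideal R, N = I • (⊤ : Submodule R M)

/-- A prime submodule. -/
def Submodule.IsPrimeSubmodule (P : Submodule R M) : Prop :=
  P ≠ ⊤ ∧ ∀ (r : R) (m : M), r • m ∈ P → m ∈ P ∨ r ∈ P.colon ⊤

/-- `M` is reduced: the intersection of all prime submodules is zero. -/
def IsReducedModule (R M : Type*) [CommRing R] [AddCommGroup M] [Module R M] : Prop :=
  sInf {P : Submodule R M | P.IsPrimeSubmodule} = ⊥

/-- A minimal prime submodule of `M`. -/
def Submodule.IsMinimalPrime (P : Submodule R M) : Prop :=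
  P.IsPrimeSubmodule ∧ ∀ Q : Submodule R M, Q.IsPrimeSubmodule → Q ≤ P → Q = P

/-- `𝔓_K`: the intersection of all minimal prime submodules containing `K`
(equal to `M` if there are none). -/
def primeRad (K : Submodule R M) : Submodule R M :=
  sInf {P : Submodule R M | P.IsMinimalPrime ∧ K ≤ P}

/-- `V(K)`: the set of minimal prime submodules containing `K`. -/
def Vset (K : Submodule R M) : Set (Submodule R M) :=
  {P : Submodule R M | P.IsMinimalPrime ∧ K ≤ P}

/-- A quasi `z°`-submodule. -/
def IsQuasiZSubmodule (N : Submodule R M) : Prop :=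
  N ≠ ⊤ ∧ ∀ a ∈ N.colon ⊤, primeRad (Ideal.span {a} • (⊤ : Submodule R M)) ≤ N

/-- `𝔓_I` for an ideal: intersection of all minimal prime ideals of `R` containing `I`. -/
def idealPrimeRad (I : Ideal R) : Ideal R :=
  sInf {p : Ideal R | p ∈ minimalPrimes R ∧ I ≤ p}

/-- A `z°`-ideal of `R`. -/
def IsZIdeal (I : Ideal R) : Prop :=
  I ≠ ⊤ ∧ ∀ a ∈ I, idealPrimeRad (Ideal.span {a}) ≤ I

/-- `(0 :_M J)` for an ideal `J`. -/
def pointAnn (J : Ideal R) : Submodule R M where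
  carrier := {m : M | ∀ j ∈ J, j • m = 0}
  zero_mem' := by intro j _; simp
  add_mem' := by
    intro a b ha hb j hj
    rw [smul_add, ha j hj, hb j hj, add_zero]
  smul_mem' := by
    intro c m hm j hj
    rw [smul_comm, hm j hj, smul_zero]

open Submodule

theorem Ideal.exists_mul_eq_zero_of_mem_minimalPrimes [IsReduced R] {p : Ideal R}
    (hp : p ∈ minimalPrimes R) {x : R} (hx : x ∈ p) : ∃ y ∉ p, y * x = 0 := by
  have := hp.1.1
  -- `p R_p` is the nilradical of `R_p`, so some power of `x` dies in `R_p`.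
  have hxrad : algebraMap R (Localization.AtPrime p) x ∈
      ((⊥ : Ideal R).map (algebraMap R (Localization.AtPrime p))).radical := by
    rw [IsLocalization.AtPrime.radical_map_of_mem_minimalPrimes _ p ⊥ hp]
    exact Ideal.mem_map_of_mem _ hx
  obtain ⟨n, hn⟩ := hxrad
  rw [Ideal.map_bot, Ideal.mem_bot, ← map_pow,
    IsLocalization.map_eq_zero_iff p.primeCompl] at hn
  obtain ⟨⟨y, hy⟩, hyx⟩ := hn
  refine ⟨y, hy, IsNilpotent.eq_zero ⟨n + 1, ?_⟩⟩
  calc (y * x) ^ (n + 1) = (y * x ^ n) * (y ^ n * x) := by ring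
    _ = 0 := by rw [hyx, zero_mul]

theorem Submodule.IsPrimeSubmodule.isPrime_colon {P : Submodule R M}
    (hP : P.IsPrimeSubmodule) : (P.colon ⊤).IsPrime where
  ne_top' h := hP.1 (eq_top_iff.mpr fun x _ => (colon_eq_top_iff_subset _).mp h trivial)
  mem_or_mem' {r s} hrs := by
    refine or_iff_not_imp_right.mpr fun hs => ?_
    obtain ⟨x, -, hx⟩ := not_forall₂.mp (mem_colon.not.mp hs)
    exact (hP.2 r (s • x) (smul_smul r s x ▸ mem_colon.mp hrs x trivial)).resolve_left hx

theorem IsReducedModule.isReduced (hfaithful : (⊥ : Submodule R M).colon ⊤ = ⊥)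
    (hred : IsReducedModule R M) : IsReduced R where
  eq_zero _ := fun ⟨n, hn⟩ => by
    rw [← mem_bot R, ← hfaithful, mem_colon]
    intro x _
    rw [← hred, mem_sInf]
    intro P hP
    exact mem_colon.mp (hP.isPrime_colon.mem_of_pow_mem n (hn ▸ zero_mem _)) x trivial

theorem Submodule.mul_smul_eq_zero_of_span_singleton_eq {m : M} {I : Ideal R}
    (hI : span R {m} = I • ⊤) {c : R} (hc : c • m = 0) {i : R} (hi : i ∈ I) (x : M) :
    (c * i) • x = 0 := by
  obtain ⟨t, ht⟩ := mem_span_singleton.mp (hI ▸ smul_mem_smul hi trivial : i • x ∈ span R {m})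
  rw [mul_smul, ← ht, smul_comm, hc, smul_zero]

theorem Submodule.mem_torsion'_primeCompl_of_smul_mem {q : Ideal R} [q.IsPrime] {r : R}
    (hr : r ∉ q) {x : M} (hx : r • x ∈ torsion' R M q.primeCompl) :
    x ∈ torsion' R M q.primeCompl := by
  obtain ⟨⟨e, he⟩, hex⟩ := hx
  exact ⟨⟨e * r, q.primeCompl.mul_mem he hr⟩, by rw [Submonoid.mk_smul, mul_smul]; exact hex⟩

theorem Submodule.ideal_smul_top_le_torsion'_primeCompl [IsReduced R] {q : Ideal R}
    [q.IsPrime] (hq : q ∈ minimalPrimes R) :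
    q • (⊤ : Submodule R M) ≤ torsion' R M q.primeCompl :=
  smul_le.mpr fun t ht x _ =>
    let ⟨d, hd, hdt⟩ := Ideal.exists_mul_eq_zero_of_mem_minimalPrimes hq ht
    ⟨⟨d, hd⟩, show d • t • x = 0 by rw [smul_smul, hdt, zero_smul]⟩

theorem Submodule.torsion'_primeCompl_le_ideal_smul_top
    (hfaithful : (⊥ : Submodule R M).colon ⊤ = ⊥) (hmul : IsMultiplicationModule R M)
    {q : Ideal R} [q.IsPrime] : torsion' R M q.primeCompl ≤ q • ⊤ := by
  rintro m ⟨⟨e, he⟩, hem⟩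
  obtain ⟨I, hI⟩ := hmul (span R {m})
  have hIq : I ≤ q := fun i hi => by
    have hei : e * i ∈ (⊥ : Submodule R M).colon ⊤ := mem_colon.mpr fun x _ =>
      (mem_bot R).mpr (mul_smul_eq_zero_of_span_singleton_eq hI hem hi x)
    rw [hfaithful, Ideal.mem_bot] at hei
    exact (Ideal.IsPrime.mem_or_mem ‹_› (hei ▸ q.zero_mem)).resolve_left he
  exact smul_mono_left hIq (hI ▸ mem_span_singleton_self m)

theorem Submodule.torsion'_primeCompl_eq_ideal_smul_top
    (hfaithful : (⊥ : Submodule R M).colon ⊤ = ⊥) (hmul : IsMultiplicationModule R M)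
    [IsReduced R] {q : Ideal R} [q.IsPrime] (hq : q ∈ minimalPrimes R) :
    torsion' R M q.primeCompl = q • ⊤ :=
  le_antisymm (torsion'_primeCompl_le_ideal_smul_top hfaithful hmul)
    (ideal_smul_top_le_torsion'_primeCompl hq)

theorem Submodule.isPrimeSubmodule_torsion'_primeCompl (hmul : IsMultiplicationModule R M)
    [IsReduced R] {q : Ideal R} [q.IsPrime] (hq : q ∈ minimalPrimes R)
    (hne : torsion' R M q.primeCompl ≠ ⊤) : (torsion' R M q.primeCompl).IsPrimeSubmodule := by
  refine ⟨hne, fun r m hrm => or_iff_not_imp_left.mpr fun hm => ?_⟩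
  obtain ⟨⟨c, hc⟩, hcrm⟩ := hrm
  obtain ⟨I, hI⟩ := hmul (span R {m})
  obtain ⟨i, hiI, hiq⟩ : ∃ i ∈ I, i ∉ q := SetLike.not_le_iff_exists.mp fun hIq =>
    hm (ideal_smul_top_le_torsion'_primeCompl hq
      (smul_mono_left hIq (hI ▸ mem_span_singleton_self m)))
  refine mem_colon.mpr fun x _ => ⟨⟨c * i, q.primeCompl.mul_mem hc hiq⟩, ?_⟩
  rw [Submonoid.mk_smul, smul_smul, show c * i * r = c * r * i by ring]
  exact mul_smul_eq_zero_of_span_singleton_eq hI (by rwa [mul_smul]) hiI x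

theorem Submodule.IsMinimalPrime.colon_mem_minimalPrimes
    (hfaithful : (⊥ : Submodule R M).colon ⊤ = ⊥) (hmul : IsMultiplicationModule R M)
    [IsReduced R] {P : Submodule R M} (hP : P.IsMinimalPrime) :
    P.colon ⊤ ∈ minimalPrimes R := by
  have := hP.1.isPrime_colon
  obtain ⟨q, hq, hqP⟩ := Ideal.exists_minimalPrimes_le (bot_le : ⊥ ≤ P.colon ⊤)
  have := hq.1.1
  have hQP : torsion' R M q.primeCompl ≤ P := by
    rw [torsion'_primeCompl_eq_ideal_smul_top hfaithful hmul hq]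
    exact smul_le.mpr fun r hr x _ => mem_colon.mp (hqP hr) x trivial
  have hQ : torsion' R M q.primeCompl ≠ ⊤ := fun h => hP.1.1 (top_unique (h ▸ hQP))
  have hQeq : torsion' R M q.primeCompl = P :=
    hP.2 _ (isPrimeSubmodule_torsion'_primeCompl hmul hq hQ) hQP
  suffices P.colon ⊤ ≤ q from le_antisymm this hqP ▸ hq
  refine fun r hr => not_not.mp fun hrq => hQ (eq_top_iff.mpr fun x _ => ?_)
  exact mem_torsion'_primeCompl_of_smul_mem hrq (hQeq.ge (mem_colon.mp hr x trivial))

theorem Submodule.isPrimeSubmodule_sInf_of_isChain {c : Set (Submodule R M)}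
    (hc : IsChain (· ≤ ·) c) (hne : c.Nonempty) (hprime : ∀ P ∈ c, P.IsPrimeSubmodule) :
    (sInf c).IsPrimeSubmodule := by
  obtain ⟨P₀, hP₀⟩ := hne
  refine ⟨fun h => (hprime P₀ hP₀).1 (top_unique (h ▸ sInf_le hP₀)), fun r x hrx => ?_⟩
  refine or_iff_not_imp_left.mpr fun hx =>
    mem_colon.mpr fun y _ => mem_sInf.mpr fun P₂ hP₂ => ?_
  obtain ⟨P₁, hP₁, hxP₁⟩ := not_forall₂.mp (mem_sInf.not.mp hx)
  rcases hc.total hP₁ hP₂ with h | h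
  · have := ((hprime P₁ hP₁).2 r x (mem_sInf.mp hrx P₁ hP₁)).resolve_left hxP₁
    exact h (mem_colon.mp this y trivial)
  · have := ((hprime P₂ hP₂).2 r x (mem_sInf.mp hrx P₂ hP₂)).resolve_left fun h' => hxP₁ (h h')
    exact mem_colon.mp this y trivial

theorem Submodule.IsPrimeSubmodule.exists_isMinimalPrime_le {P : Submodule R M}
    (hP : P.IsPrimeSubmodule) : ∃ Q : Submodule R M, Q.IsMinimalPrime ∧ Q ≤ P := by
  obtain ⟨Q, hQP, hQ⟩ := @zorn_le_nonempty₀ (Submodule R M)ᵒᵈ _ {Q | Q.IsPrimeSubmodule}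
    (fun c hcS hc y hy => ⟨sInf (α := Submodule R M) c,
      isPrimeSubmodule_sInf_of_isChain (c := c) hc.symm ⟨y, hy⟩ hcS,
      fun z hz => sInf_le (α := Submodule R M) hz⟩) P hP
  exact ⟨Q, ⟨hQ.1, fun Q' hQ' hle => (hQ.eq_of_le hQ' hle).symm⟩, hQP⟩

theorem Submodule.mem_bot_colon_of_mul_eq_zero {s a : R} (h : s * a = 0) (N : Submodule R M) :
    s ∈ (⊥ : Submodule R M).colon ((Ideal.span {a} • N : Submodule R M) : Set M) := by
  rw [mem_colon_iff_le, ← ideal_span_singleton_smul, ← smul_assoc, smul_eq_mul,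
    Ideal.span_singleton_mul_span_singleton, h, Ideal.span_singleton_zero, bot_smul]

theorem Submodule.IsPrimeSubmodule.le_or_mem_colon {Q K : Submodule R M}
    (hQ : Q.IsPrimeSubmodule) {j : R} (hj : j ∈ (⊥ : Submodule R M).colon (K : Set M)) :
    K ≤ Q ∨ j ∈ Q.colon ⊤ :=
  or_iff_not_imp_left.mpr fun hK =>
    let ⟨z, hz, hzQ⟩ := SetLike.not_le_iff_exists.mp hK
    (hQ.2 j z ((mem_bot R).mp (mem_colon.mp hj z hz) ▸ Q.zero_mem)).resolve_left hzQ

theorem primeRad_le_pointAnn_bot_colon (hred : IsReducedModule R M) (K : Submodule R M) :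
    primeRad K ≤ pointAnn ((⊥ : Submodule R M).colon (K : Set M)) := by
  intro x hx j hj
  rw [← mem_bot R, ← hred, mem_sInf]
  intro P hP
  obtain ⟨Q, hQ, hQP⟩ := hP.exists_isMinimalPrime_le
  refine hQP ?_
  rcases hQ.1.le_or_mem_colon hj with hKQ | hjQ
  · exact Q.smul_mem j (mem_sInf.mp hx Q ⟨hQ, hKQ⟩)
  · exact mem_colon.mp hjQ x trivial

theorem pointAnn_bot_colon_le_primeRad (hfaithful : (⊥ : Submodule R M).colon ⊤ = ⊥)
    (hmul : IsMultiplicationModule R M) [IsReduced R] (a : R) :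
    pointAnn ((⊥ : Submodule R M).colon ((Ideal.span {a} • ⊤ : Submodule R M) : Set M)) ≤
      primeRad (Ideal.span {a} • (⊤ : Submodule R M)) := by
  refine fun x hx => mem_sInf.mpr fun P ⟨hP, haP⟩ => ?_
  have ha : a ∈ P.colon ⊤ := mem_colon.mpr fun y _ =>
    haP (smul_mem_smul (Ideal.mem_span_singleton_self a) trivial)
  obtain ⟨s, hs, hsa⟩ := Ideal.exists_mul_eq_zero_of_mem_minimalPrimes
    (hP.colon_mem_minimalPrimes hfaithful hmul) ha
  have hsx : s • x = 0 := hx s (mem_bot_colon_of_mul_eq_zero hsa ⊤)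
  exact (hP.1.2 s x (hsx ▸ P.zero_mem)).resolve_right hs

theorem stmt5 (hfaithful : (⊥ : Submodule R M).colon ⊤ = ⊥)
    (hmul : IsMultiplicationModule R M) (hred : IsReducedModule R M) (a : R) :
    pointAnn ((⊥ : Submodule R M).colon ((Ideal.span {a} • (⊤ : Submodule R M) : Submodule R M) : Set M)) =
      primeRad (Ideal.span {a} • (⊤ : Submodule R M)) := by
  have := hred.isReduced hfaithful
  exact le_antisymm (pointAnn_bot_colon_le_primeRad hfaithful hmul a)
      (primeRad_le_pointAnn_bot_colon hred _)
end

section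
/- Let M be a faithful finitely generated multiplication R-module and I a z°-ideal of R. Then IM is a quasi z°-submodule of M. -/
variable {R : Type*} [CommRing R] {M : Type*} [AddCommGroup M] [Module R M]

/-!
For a faithful finitely generated multiplication module, `J ↦ JM` is injective with inverse
`N ↦ (N : M)`: if `a ∈ (JM : M) \ J`, pick a maximal ideal `m ⊇ (J : a)`; by Nakayama `mM ≠ M`,
and local cyclicity gives `q ∉ m` with `qM ⊆ Rx`, which forces `q² a ∈ J`. Consequently `pM` is a
minimal prime submodule for every minimal prime `p`, and `𝔓_{aM} = (𝔓_{aM} : M) M ⊆ 𝔓_a M ⊆ IM`.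
-/

theorem Ideal.eq_top_of_smul_top_eq_top [Module.Finite R M] [FaithfulSMul R M] {J : Ideal R}
    (hJ : J • (⊤ : Submodule R M) = ⊤) : J = ⊤ := by
  obtain ⟨r, hr1, hr0⟩ := Submodule.exists_sub_one_mem_and_smul_eq_zero_of_fg_of_le_smul J
    (⊤ : Submodule R M) Module.Finite.fg_top hJ.ge
  obtain rfl : r = 0 := FaithfulSMul.eq_of_smul_eq_smul fun m => by
    rw [hr0 m trivial, zero_smul]
  exact (Ideal.eq_top_iff_one J).2 (by simpa using J.neg_mem hr1)

theorem Submodule.IsPrimeSubmodule.isPrime_colon_s11 {Q : Submodule R M} (hQ : Q.IsPrimeSubmodule) :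
    (Q.colon ⊤).IsPrime := by
  refine ⟨fun h => hQ.1 ?_, fun {r s} hrs => or_iff_not_imp_right.2 fun hs => ?_⟩
  · simpa using (Submodule.colon_eq_top_iff_subset _).1 h
  · obtain ⟨y, -, hy⟩ : ∃ y ∈ (⊤ : Set M), s • y ∉ Q := by
      simpa [Submodule.mem_colon] using hs
    refine (hQ.2 r (s • y) ?_).resolve_left hy
    simpa [mul_smul] using Submodule.mem_colon.1 hrs y trivial

/-- If `qM ⊆ Rx`, then `q • (a • x) = c • x` for some `c ∈ J`, and faithfulness turns this into
`(q a - c) q = 0`. -/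
theorem mul_self_mul_mem_of_mem_colon_smul_top [FaithfulSMul R M] {J : Ideal R} {q a : R} {x : M}
    (hqx : ∀ y : M, q • y ∈ Submodule.span R {x})
    (ha : a ∈ (J • (⊤ : Submodule R M)).colon ⊤) : q * q * a ∈ J := by
  have hmap : (J • (⊤ : Submodule R M)).map (LinearMap.lsmul R M q) ≤ J • Submodule.span R {x} := by
    rw [Submodule.map_smul'', Submodule.map_top]
    exact smul_mono_right _ (LinearMap.range_le_iff_comap.2 <|
      Submodule.eq_top_iff'.2 hqx)
  obtain ⟨c, hcJ, hc⟩ := Submodule.mem_smul_span_singleton.1 <|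
    hmap ⟨a • x, Submodule.mem_colon.1 ha x trivial, rfl⟩
  have hkill : (q * a - c) * q = 0 := FaithfulSMul.eq_of_smul_eq_smul fun y => by
    obtain ⟨s, hs⟩ := Submodule.mem_span_singleton.1 (hqx y)
    simp only [LinearMap.lsmul_apply] at hc
    rw [zero_smul, mul_smul, ← hs, smul_comm, sub_smul, mul_smul, hc, sub_self, smul_zero]
  have heq : q * q * a = c * q := by linear_combination hkill
  exact heq ▸ J.mul_mem_right q hcJ

namespace IsMultiplicationModule

theorem colon_smul_top_eq (hmul : IsMultiplicationModule R M) (N : Submodule R M) :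
    (N.colon ⊤) • (⊤ : Submodule R M) = N := by
  obtain ⟨J, rfl⟩ := hmul N
  refine le_antisymm (Submodule.smul_le.2 fun r hr n hn => Submodule.mem_colon.1 hr n hn) ?_
  exact Submodule.smul_mono_left fun r hr =>
    Submodule.mem_colon.2 fun n _ => Submodule.smul_mem_smul hr trivial

theorem exists_smul_mem_span_singleton (hmul : IsMultiplicationModule R M) {p : Ideal R} {x : M}
    (hx : x ∉ p • (⊤ : Submodule R M)) : ∃ q ∉ p, ∀ y : M, q • y ∈ Submodule.span R {x} := by
  obtain ⟨J, hJ⟩ := hmul (Submodule.span R {x})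
  obtain ⟨q, hqJ, hqp⟩ : ∃ q ∈ J, q ∉ p := SetLike.not_le_iff_exists.1 fun hJp =>
    hx (Submodule.smul_mono_left hJp (hJ ▸ Submodule.mem_span_singleton_self x))
  exact ⟨q, hqp, fun y => hJ ▸ Submodule.smul_mem_smul hqJ trivial⟩

section FaithfulFinite

variable [Module.Finite R M] [FaithfulSMul R M]

theorem colon_smul_top (hmul : IsMultiplicationModule R M) (J : Ideal R) :
    (J • (⊤ : Submodule R M)).colon ⊤ = J := by
  refine le_antisymm (fun a ha => ?_) fun r hr =>
    Submodule.mem_colon.2 fun _ _ => Submodule.smul_mem_smul hr trivial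
  by_contra haJ
  obtain ⟨m, hm, hKm⟩ := Ideal.exists_le_maximal (J.colon {a}) fun h =>
    haJ (by simpa using (Submodule.colon_eq_top_iff_subset _).1 h)
  obtain ⟨x, hx⟩ : ∃ x : M, x ∉ m • (⊤ : Submodule R M) := by
    by_contra! h
    exact hm.ne_top (Ideal.eq_top_of_smul_top_eq_top (Submodule.eq_top_iff'.2 h))
  obtain ⟨q, hqm, hqx⟩ := hmul.exists_smul_mem_span_singleton hx
  have hqq : q * q ∈ m :=
    hKm (Submodule.mem_colon_singleton.2 (mul_self_mul_mem_of_mem_colon_smul_top hqx ha))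
  exact hqm ((hm.isPrime.mem_or_mem hqq).elim id id)

theorem isPrimeSubmodule_smul_top (hmul : IsMultiplicationModule R M) {p : Ideal R}
    (hp : p.IsPrime) : (p • (⊤ : Submodule R M)).IsPrimeSubmodule := by
  refine ⟨fun h => hp.ne_top (Ideal.eq_top_of_smul_top_eq_top h),
    fun r x hrx => or_iff_not_imp_left.2 fun hx => ?_⟩
  obtain ⟨b, hbp, hbx⟩ := hmul.exists_smul_mem_span_singleton hx
  have hrb : r * b ∈ (p • (⊤ : Submodule R M)).colon ⊤ := Submodule.mem_colon.2 fun y _ => by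
    obtain ⟨s, hs⟩ := Submodule.mem_span_singleton.1 (hbx y)
    rw [mul_smul, ← hs, smul_comm]
    exact Submodule.smul_mem _ s hrx
  rw [hmul.colon_smul_top] at hrb ⊢
  exact (hp.mem_or_mem hrb).resolve_right hbp

theorem isMinimalPrime_smul_top (hmul : IsMultiplicationModule R M) {p : Ideal R}
    (hp : p ∈ minimalPrimes R) : (p • (⊤ : Submodule R M)).IsMinimalPrime := by
  refine ⟨hmul.isPrimeSubmodule_smul_top hp.1.1, fun Q hQ hQp => ?_⟩
  have hle : Q.colon ⊤ ≤ p := hmul.colon_smul_top p ▸ Submodule.colon_mono hQp subset_rfl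
  rw [← hmul.colon_smul_top_eq Q, le_antisymm hle (hp.2 ⟨hQ.isPrime_colon_s11, bot_le⟩ hle)]

theorem primeRad_smul_top_le (hmul : IsMultiplicationModule R M) (J : Ideal R) :
    primeRad (J • (⊤ : Submodule R M)) ≤ idealPrimeRad J • ⊤ := by
  rw [← hmul.colon_smul_top_eq (primeRad _)]
  refine Submodule.smul_mono_left (le_sInf fun p ⟨hp, hJp⟩ => ?_)
  rw [← hmul.colon_smul_top p]
  exact Submodule.colon_mono
    (sInf_le ⟨hmul.isMinimalPrime_smul_top hp, Submodule.smul_mono_left hJp⟩) subset_rfl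

end FaithfulFinite

end IsMultiplicationModule

theorem stmt11 (hfaithful : (⊥ : Submodule R M).colon ⊤ = ⊥)
    (hfin : Module.Finite R M) (hmul : IsMultiplicationModule R M)
    (I : Ideal R) (hI : IsZIdeal I) :
    IsQuasiZSubmodule (I • (⊤ : Submodule R M)) := by
  have : FaithfulSMul R M := Module.annihilator_eq_bot.1 <| by
    rwa [← Submodule.annihilator_top, ← Submodule.bot_colon, Submodule.top_coe]
  refine ⟨fun h => hI.1 (Ideal.eq_top_of_smul_top_eq_top h), fun a ha => ?_⟩
  rw [hmul.colon_smul_top I] at ha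
  exact (hmul.primeRad_smul_top_le _).trans (Submodule.smul_mono_left (hI.2 a ha))
end

section
/- Let M be a faithful multiplication R-module and N a quasi z°-submodule of M. Then (N :_R M) is contained in the set Zd_R(M) of zero-divisors of R on M. -/
variable {R : Type*} [CommRing R] {M : Type*} [AddCommGroup M] [Module R M]

/-!
Let `r ∈ (N :_R M)`. Since `𝔓_{rM} ⊆ N ≠ M`, some minimal prime submodule `P` contains `rM`,
so `r ∈ (P :_R M)`. In a faithful multiplication module `qM` is a prime submodule with
`(qM :_R M) = q` for every prime ideal `q` with `qM ≠ M`; comparing `P` with `qM` for a minimal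
prime `q ⊆ (P :_R M)` shows that `(P :_R M)` is a minimal prime of `R`. Finally, an element of a
minimal prime over `ann(M)` is a zero-divisor on `M`.
-/

open Submodule

namespace Submodule

theorem colon_top_smul_top_le (N : Submodule R M) : N.colon ⊤ • (⊤ : Submodule R M) ≤ N :=
  smul_le.mpr fun _ hr n _ => mem_colon.mp hr n trivial

theorem le_colon_smul_top (I : Ideal R) : I ≤ (I • (⊤ : Submodule R M)).colon ⊤ :=
  fun _ ha => mem_colon.mpr fun _ _ => smul_mem_smul ha trivial

theorem smul_left_comm (I J : Ideal R) (N : Submodule R M) : I • J • N = J • I • N := by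
  rw [← Submodule.mul_smul, mul_comm, Submodule.mul_smul]

theorem IsPrimeSubmodule.colon_isPrime {P : Submodule R M} (hP : P.IsPrimeSubmodule) :
    (P.colon ⊤).IsPrime := by
  refine ⟨fun h => hP.1 (eq_top_iff.mpr fun m _ => ?_), fun {x y} hxy => ?_⟩
  · simpa using mem_colon.mp (h ▸ Submodule.mem_top : (1 : R) ∈ P.colon ⊤) m trivial
  · by_contra! hxy'
    obtain ⟨n, -, hn⟩ := not_forall₂.mp (mt mem_colon.mpr hxy'.2)
    have hxyn : x • y • n ∈ P := smul_smul x y n ▸ mem_colon.mp hxy n trivial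
    exact hxy'.1 ((hP.2 x _ hxyn).resolve_left hn)

end Submodule

theorem faithfulSMul_of_bot_colon_eq_bot (h : (⊥ : Submodule R M).colon ⊤ = ⊥) :
    FaithfulSMul R M := by
  rwa [Set.top_eq_univ, bot_colon', span_univ, annihilator_top, Module.annihilator_eq_bot] at h

theorem exists_isMinimalPrime_le_of_primeRad_le {K N : Submodule R M} (hK : primeRad K ≤ N)
    (hN : N ≠ ⊤) : ∃ P : Submodule R M, P.IsMinimalPrime ∧ K ≤ P := by
  by_contra! h
  have hV : {P : Submodule R M | P.IsMinimalPrime ∧ K ≤ P} = ∅ :=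
    Set.eq_empty_of_forall_notMem fun P hP => h P hP.1 hP.2
  rw [primeRad, hV, sInf_empty, top_le_iff] at hK
  exact hN hK

theorem exists_ne_zero_smul_eq_zero_of_mem_minimalPrimes {p : Ideal R}
    (hp : p ∈ (Module.annihilator R M).minimalPrimes) {r : R} (hr : r ∈ p) :
    ∃ m : M, m ≠ 0 ∧ r • m = 0 := by
  by_contra! h
  exact (isSMulRegular_iff_right_eq_zero_of_smul.mpr fun m => not_imp_not.mp (h m)
    ).notMem_of_mem_minimalPrimes hp hr

namespace IsMultiplicationModule

variable (hmul : IsMultiplicationModule R M)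
include hmul

theorem colon_top_smul_top (N : Submodule R M) : N.colon ⊤ • (⊤ : Submodule R M) = N := by
  obtain ⟨I, rfl⟩ := hmul N
  exact le_antisymm (colon_top_smul_top_le _) (smul_mono_left (le_colon_smul_top I))

theorem mem_colon_span_singleton_smul_top (m : M) :
    m ∈ (span R {m}).colon ⊤ • (⊤ : Submodule R M) :=
  (hmul.colon_top_smul_top _).symm ▸ mem_span_singleton_self m

variable [FaithfulSMul R M] {q : Ideal R} [q.IsPrime] {m : M}

theorem mem_of_smul_eq_zero (hm : m ∉ q • (⊤ : Submodule R M)) {c : R} (hc : c • m = 0) :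
    c ∈ q := by
  obtain ⟨i, hi, hiq⟩ := SetLike.not_le_iff_exists.mp fun (hle : (span R {m}).colon ⊤ ≤ q) =>
    hm (smul_mono_left hle (hmul.mem_colon_span_singleton_smul_top m))
  have hci : c * i = 0 := FaithfulSMul.eq_of_smul_eq_smul fun n => by
    obtain ⟨t, ht⟩ := mem_span_singleton.mp (mem_colon.mp hi n trivial)
    rw [mul_smul, ← ht, smul_comm, hc, smul_zero, zero_smul]
  exact (Ideal.IsPrime.mem_or_mem ‹_› (hci ▸ q.zero_mem)).resolve_right hiq

theorem colon_smul_top_le (hm : m ∉ q • (⊤ : Submodule R M)) :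
    (q • (⊤ : Submodule R M)).colon ⊤ ≤ q := by
  intro a ha
  set I := (span R {m}).colon ⊤
  have hle : (q • (⊤ : Submodule R M)).colon ⊤ • I • (⊤ : Submodule R M) ≤ q • span R {m} :=
    calc _ = I • (q • (⊤ : Submodule R M)).colon ⊤ • ⊤ := smul_left_comm ..
      _ ≤ I • q • ⊤ := smul_mono_right I (colon_top_smul_top_le _)
      _ = q • span R {m} := by rw [smul_left_comm, hmul.colon_top_smul_top]
  have ham : a • m ∈ q • span R {m} :=
    hle (smul_mem_smul ha (hmul.mem_colon_span_singleton_smul_top m))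
  obtain ⟨c, hcq, hcm⟩ := (Submodule.mem_smul_span_singleton).mp ham
  have hac : a - c ∈ q := hmul.mem_of_smul_eq_zero hm (by rw [sub_smul, hcm, sub_self])
  simpa using add_mem hac hcq

theorem mem_smul_top_of_smul_mem {a : R} (ha : a ∉ q) (ham : a • m ∈ q • (⊤ : Submodule R M)) :
    m ∈ q • (⊤ : Submodule R M) := by
  by_contra hm
  refine hm (smul_mono_left (fun i hi => ?_) (hmul.mem_colon_span_singleton_smul_top m))
  have hai : a * i ∈ (q • (⊤ : Submodule R M)).colon ⊤ := mem_colon.mpr fun n _ => by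
    obtain ⟨t, ht⟩ := mem_span_singleton.mp (mem_colon.mp hi n trivial)
    rw [mul_smul, ← ht, smul_comm]
    exact smul_mem _ t ham
  exact ((Ideal.IsPrime.mem_or_mem ‹_› (hmul.colon_smul_top_le hm hai)).resolve_left ha)

theorem isPrimeSubmodule_smul_top_s14 (hq : q • (⊤ : Submodule R M) ≠ ⊤) :
    (q • (⊤ : Submodule R M)).IsPrimeSubmodule := by
  refine ⟨hq, fun a m ham => ?_⟩
  by_cases ha : a ∈ q
  · exact Or.inr (le_colon_smul_top q ha)
  · exact Or.inl (hmul.mem_smul_top_of_smul_mem ha ham)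

theorem colon_smul_top_eq_s14 (hq : q • (⊤ : Submodule R M) ≠ ⊤) :
    (q • (⊤ : Submodule R M)).colon ⊤ = q := by
  obtain ⟨m, -, hm⟩ := SetLike.not_le_iff_exists.mp (mt top_le_iff.mp hq)
  exact le_antisymm (hmul.colon_smul_top_le hm) (le_colon_smul_top q)

theorem colon_mem_minimalPrimes_of_isMinimalPrime {P : Submodule R M} (hP : P.IsMinimalPrime) :
    P.colon ⊤ ∈ minimalPrimes R := by
  have := hP.1.colon_isPrime
  obtain ⟨q, hq, hqP⟩ := Ideal.exists_minimalPrimes_le (bot_le : ⊥ ≤ P.colon ⊤)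
  have := hq.1.1
  have hqM : q • (⊤ : Submodule R M) ≤ P :=
    (smul_mono_left hqP).trans_eq (hmul.colon_top_smul_top P)
  have hq_ne_top : q • (⊤ : Submodule R M) ≠ ⊤ := fun h => hP.1.1 (top_le_iff.mp (h ▸ hqM))
  rwa [← hP.2 _ (hmul.isPrimeSubmodule_smul_top_s14 hq_ne_top) hqM, hmul.colon_smul_top_eq_s14 hq_ne_top]

end IsMultiplicationModule

theorem stmt14 (hfaithful : (⊥ : Submodule R M).colon ⊤ = ⊥)
    (hmul : IsMultiplicationModule R M) (N : Submodule R M)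
    (hN : IsQuasiZSubmodule N) :
    ∀ r ∈ N.colon ⊤, ∃ m : M, m ≠ 0 ∧ r • m = 0 := by
  intro r hr
  have := faithfulSMul_of_bot_colon_eq_bot hfaithful
  obtain ⟨P, hP, hrP⟩ := exists_isMinimalPrime_le_of_primeRad_le (hN.2 r hr) hN.1
  have hPmin : P.colon ⊤ ∈ (Module.annihilator R M).minimalPrimes := by
    rw [Module.annihilator_eq_bot.mpr this]
    exact hmul.colon_mem_minimalPrimes_of_isMinimalPrime hP
  refine exists_ne_zero_smul_eq_zero_of_mem_minimalPrimes hPmin (mem_colon.mpr fun m _ => ?_)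
  exact hrP (smul_mem_smul (Ideal.mem_span_singleton_self r) trivial)
end

section
/- Let M be a faithful reduced multiplication R-module and N a quasi z°-submodule of M. Then every prime submodule of M that is minimal over N is itself a quasi z°-submodule of M. -/
variable {R : Type*} [CommRing R] {M : Type*} [AddCommGroup M] [Module R M]

theorem eq_colon_smul' (hmul : IsMultiplicationModule R M) (N : Submodule R M) :
    N = (N.colon ⊤) • (⊤ : Submodule R M) := by
  obtain ⟨I, hI⟩ := hmul N
  apply le_antisymm
  · have hIc : I ≤ N.colon ⊤ := fun i hi => Submodule.mem_colon.2 fun m _ => by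
      rw [hI]; exact Submodule.smul_mem_smul hi trivial
    calc N = I • ⊤ := hI
    _ ≤ (N.colon ⊤) • ⊤ := Submodule.smul_mono_left hIc
  · exact Submodule.smul_le.2 fun r hr m hm => Submodule.mem_colon.1 hr m trivial

theorem colon_prime' {P : Submodule R M} (hP : P.IsPrimeSubmodule) : (P.colon ⊤).IsPrime := by
  constructor
  · intro h
    apply hP.1
    rw [eq_top_iff]
    intro m _
    simpa using Submodule.mem_colon.1 (h ▸ Submodule.mem_top : (1:R) ∈ P.colon ⊤) m trivial
  · intro a b hab
    by_cases ha : a ∈ P.colon ⊤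
    · exact Or.inl ha
    · right
      rw [Submodule.mem_colon]
      intro m _
      have h := Submodule.mem_colon.1 hab m trivial
      rw [mul_smul] at h
      rcases hP.2 a (b • m) h with h' | h'
      · exact h'
      · exact absurd h' ha

theorem mem_smul_span_singleton' {q : Ideal R} {m x : M}
    (hx : x ∈ q • Submodule.span R {m}) : ∃ c ∈ q, c • m = x := by
  refine Submodule.smul_induction_on hx ?_ ?_
  · intro r hr n hn
    obtain ⟨s, rfl⟩ := Submodule.mem_span_singleton.1 hn
    exact ⟨r * s, q.mul_mem_right s hr, by rw [mul_smul, smul_comm]⟩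
  · rintro x y ⟨c, hc, rfl⟩ ⟨d, hd, rfl⟩
    exact ⟨c + d, q.add_mem hc hd, by rw [add_smul]⟩

theorem lemC' (hfaithful : (⊥ : Submodule R M).colon ⊤ = ⊥)
    (hmul : IsMultiplicationModule R M) {q : Ideal R} (hq : q.IsPrime)
    {r : R} (hr : r ∉ q) (hrM : ∀ y : M, r • y ∈ q • (⊤ : Submodule R M))
    {m : M} : m ∈ q • (⊤ : Submodule R M) := by
  set I := (Submodule.span R {m}).colon (⊤ : Submodule R M) with hIdef
  have hspan : Submodule.span R {m} = I • ⊤ := eq_colon_smul' hmul _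
  by_cases hIq : I ≤ q
  · have hm : m ∈ I • (⊤ : Submodule R M) := hspan ▸ Submodule.mem_span_singleton_self m
    exact Submodule.smul_mono_left hIq hm
  · exfalso
    obtain ⟨t, htI, htq⟩ := SetLike.not_le_iff_exists.1 hIq
    have htM : ∀ y : M, t • y ∈ Submodule.span R {m} := fun y =>
      Submodule.mem_colon.1 htI y trivial
    have hrm : r • m ∈ q • (⊤ : Submodule R M) := hrM m
    have key : t • (r • m) ∈ q • Submodule.span R {m} := by
      refine Submodule.smul_induction_on hrm ?_ ?_
      · intro c hc y _
        rw [smul_comm]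
        exact Submodule.smul_mem_smul hc (htM y)
      · intro x y hx hy
        rw [smul_add]
        exact Submodule.add_mem _ hx hy
    obtain ⟨c, hcq, hcm⟩ := mem_smul_span_singleton' key
    have hzero : t * t * r - t * c ∈ (⊥ : Submodule R M).colon ⊤ := by
      rw [Submodule.mem_colon]
      intro y _
      obtain ⟨s, hs⟩ := Submodule.mem_span_singleton.1 (htM y)
      have : (t * t * r) • y = (t * c) • y := by
        calc (t * t * r) • y = (t * r) • (t • y) := by rw [← mul_smul]; ring_nf
        _ = (t * r) • (s • m) := by rw [hs]
        _ = s • ((t*r) • m) := by rw [smul_comm]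
        _ = s • (t • (r • m)) := by rw [mul_smul]
        _ = s • (c • m) := by rw [hcm]
        _ = c • (s • m) := by rw [smul_comm]
        _ = c • (t • y) := by rw [hs]
        _ = (t * c) • y := by rw [mul_smul, smul_comm]
      simp [sub_smul, this]
    rw [hfaithful, Submodule.mem_bot, sub_eq_zero] at hzero
    have : t * t * r ∈ q := hzero ▸ q.mul_mem_left t hcq
    rcases hq.mem_or_mem this with h | h
    · rcases hq.mem_or_mem h with h' | h' <;> exact htq h'
    · exact hr h

theorem lemE' (hfaithful : (⊥ : Submodule R M).colon ⊤ = ⊥)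
    (hmul : IsMultiplicationModule R M) {q : Ideal R} (hq : q.IsPrime)
    (hqM : q • (⊤ : Submodule R M) ≠ ⊤) :
    (q • (⊤ : Submodule R M)).colon ⊤ ≤ q := by
  intro r hr
  by_contra hrq
  apply hqM
  rw [eq_top_iff]
  intro m _
  exact lemC' hfaithful hmul hq hrq (fun y => Submodule.mem_colon.1 hr y trivial)

theorem lemF' (hfaithful : (⊥ : Submodule R M).colon ⊤ = ⊥)
    (hmul : IsMultiplicationModule R M) {q : Ideal R} (hq : q.IsPrime)
    (hqM : q • (⊤ : Submodule R M) ≠ ⊤) :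
    (q • (⊤ : Submodule R M)).IsPrimeSubmodule := by
  refine ⟨hqM, fun r m hrm => ?_⟩
  by_cases hrq : r ∈ q
  · exact Or.inr (Submodule.mem_colon.2 fun y _ => Submodule.smul_mem_smul hrq trivial)
  · left
    set K := (q • (⊤ : Submodule R M)) ⊔ Submodule.span R {m} with hK
    set J := K.colon ⊤ with hJ
    have hKJ : K = J • ⊤ := eq_colon_smul' hmul _
    have hJq : J ≤ q := by
      intro j hj
      have hrj : r * j ∈ (q • (⊤ : Submodule R M)).colon ⊤ := by
        rw [Submodule.mem_colon]
        intro y _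
        have hjy : j • y ∈ K := Submodule.mem_colon.1 hj y trivial
        rw [hK] at hjy
        obtain ⟨u, hu, v, hv, huv⟩ := Submodule.mem_sup.1 hjy
        obtain ⟨s, rfl⟩ := Submodule.mem_span_singleton.1 hv
        have : (r * j) • y = r • u + s • (r • m) := by
          rw [mul_smul, ← huv, smul_add, smul_comm r s]
        rw [this]
        exact Submodule.add_mem _ (Submodule.smul_mem _ r hu) (Submodule.smul_mem _ s hrm)
      have := lemE' hfaithful hmul hq hqM hrj
      rcases hq.mem_or_mem this with h | h
      · exact absurd h hrq
      · exact h
    have : m ∈ K := Submodule.mem_sup_right (Submodule.mem_span_singleton_self m)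
    rw [hKJ] at this
    exact Submodule.smul_mono_left hJq this


theorem stmt17 (hfaithful : (⊥ : Submodule R M).colon ⊤ = ⊥)
    (hmul : IsMultiplicationModule R M) (hred : IsReducedModule R M)
    (N : Submodule R M) (hN : IsQuasiZSubmodule N)
    (P : Submodule R M) (hP : P.IsPrimeSubmodule) (hNP : N ≤ P)
    (hmin : ∀ Q : Submodule R M, Q.IsPrimeSubmodule → N ≤ Q → Q ≤ P → Q = P) :
    IsQuasiZSubmodule P :=  by
  have hp : (P.colon ⊤).IsPrime := colon_prime' hP
  refine ⟨hP.1, fun a ha => ?_⟩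
  have step2 : ∃ c ∉ P.colon (⊤ : Submodule R M), ∃ n : ℕ, c * a ^ n ∈ N.colon ⊤ := by
    by_contra hcon
    push_neg at hcon
    set S : Submonoid R :=
      { carrier := {s | ∃ c ∉ P.colon (⊤ : Submodule R M), ∃ n : ℕ, c * a ^ n = s}
        one_mem' := ⟨1, (Ideal.ne_top_iff_one _).1 hp.ne_top, 0, by ring⟩
        mul_mem' := by
          rintro x y ⟨c₁, hc₁, n₁, rfl⟩ ⟨c₂, hc₂, n₂, rfl⟩
          refine ⟨c₁ * c₂, fun h => ?_, n₁ + n₂, by ring⟩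
          rcases hp.mem_or_mem h with h | h
          · exact hc₁ h
          · exact hc₂ h } with hS
    have hdis : Disjoint ((N.colon (⊤ : Submodule R M)) : Set R) (S : Set R) := by
      rw [Set.disjoint_left]
      rintro x hx ⟨c, hc, n, rfl⟩
      exact hcon c hc n hx
    obtain ⟨q, hqprime, hIq, hdisj⟩ := Ideal.exists_le_prime_disjoint (N.colon ⊤) S hdis
    have haq : a ∉ q := fun h =>
      Set.disjoint_left.1 hdisj h ⟨1, (Ideal.ne_top_iff_one _).1 hp.ne_top, 1, by ring⟩
    have hqp : q ≤ P.colon ⊤ := by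
      intro x hx
      by_contra hxp
      exact Set.disjoint_left.1 hdisj hx ⟨x, hxp, 0, by ring⟩
    have hNQ : N ≤ q • (⊤ : Submodule R M) := by
      calc N = (N.colon ⊤) • ⊤ := eq_colon_smul' hmul N
      _ ≤ q • ⊤ := Submodule.smul_mono_left hIq
    have hQP : q • (⊤ : Submodule R M) ≤ P := by
      calc q • (⊤ : Submodule R M) ≤ (P.colon ⊤) • ⊤ := Submodule.smul_mono_left hqp
      _ = P := (eq_colon_smul' hmul P).symm
    have hQtop : q • (⊤ : Submodule R M) ≠ ⊤ := fun h => hP.1 (top_le_iff.1 (h ▸ hQP))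
    have hQ : (q • (⊤ : Submodule R M)).IsPrimeSubmodule := lemF' hfaithful hmul hqprime hQtop
    have hQeq : q • (⊤ : Submodule R M) = P := hmin _ hQ hNQ hQP
    rw [← hQeq] at ha
    exact haq (lemE' hfaithful hmul hqprime hQtop ha)
  obtain ⟨c, hc, n, hca⟩ := step2
  have h3 := hN.2 _ hca
  intro x hx
  have hcx : c • x ∈ N := by
    apply h3
    simp only [primeRad, Submodule.mem_sInf]
    rintro Q ⟨hQmin, hle⟩
    have hqQ : (Q.colon (⊤ : Submodule R M)).IsPrime := colon_prime' hQmin.1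
    have hmem : c * a ^ n ∈ Q.colon (⊤ : Submodule R M) :=
      Submodule.mem_colon.2 fun m _ =>
        hle (Submodule.smul_mem_smul (Submodule.mem_span_singleton_self _) trivial)
    rcases hqQ.mem_or_mem hmem with h | h
    · exact Submodule.mem_colon.1 h x trivial
    · have haQ : a ∈ Q.colon (⊤ : Submodule R M) := hqQ.mem_of_pow_mem n h
      have hspanle : Ideal.span {a} • (⊤ : Submodule R M) ≤ Q := by
        refine Submodule.smul_le.2 fun r hr m _ => ?_
        obtain ⟨s, rfl⟩ := Submodule.mem_span_singleton.1 hr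
        rw [smul_eq_mul, mul_smul]
        exact Submodule.smul_mem _ s (Submodule.mem_colon.1 haQ m trivial)
      have hxQ : x ∈ Q := Submodule.mem_sInf.1 hx Q ⟨hQmin, hspanle⟩
      exact Submodule.smul_mem _ c hxQ
  rcases hP.2 c x (hNP hcx) with h | h
  · exact h
  · exact absurd h hc
end
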